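/- arXiv:2104.09450 — 3 statements merged into one kernel-verified Lean document; each statement's English description precedes it below -/
import Mathlib

section
/- Let λ ∈ ℂ with |λ| > 1, let G = diag(λ, λ⁻¹), and let S = [[a, b], [c, d]] and N = [[a′, b′], [c′, d′]] be 2×2 complex matrices with det S = det N = 1 and b·c′ ≠ 0. For each natural number n let r_n denote the spectral radius of the matrix M_n = S · G⁻ⁿ · N · Gⁿ. Then r_n / |λ|^(2n) converges to |b·c′| as n → ∞. -/
/-!
Each `M_n = S G⁻ⁿ N Gⁿ` has determinant 1, so its eigenvalues are `μ, μ⁻¹` with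
`μ + μ⁻¹ = tr M_n`; taking `|μ| ≥ 1` gives `|r_n - |tr M_n|| ≤ |μ⁻¹| ≤ 1`. Conjugating by the
diagonal `Gⁿ` scales the off-diagonal entries of `N` by `λ^{±2n}`, so
`tr M_n = a a' + d d' + b c' λ^{2n} + c b' λ^{-2n}` and `|tr M_n| / |λ|^{2n} → |b c'|`;
the bounded error vanishes after division by `|λ|^{2n}`.
-/

open Matrix Filter

/-- The spectral radius of a 2×2 complex matrix: the maximum of `|μ|` over the
elements `μ` of its spectrum (equivalently, the roots of its characteristic polynomial). -/
noncomputable def specRad (M : Matrix (Fin 2) (Fin 2) ℂ) : ℝ :=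
  (spectralRadius ℂ M).toReal

open Topology

namespace Matrix

variable {R K : Type*} [CommRing R] [Field K]

theorem mem_spectrum_fin_two_iff (M : Matrix (Fin 2) (Fin 2) K) (x : K) :
    x ∈ spectrum K M ↔ x ^ 2 - M.trace * x + M.det = 0 := by
  simp [mem_spectrum_iff_isRoot_charpoly, charpoly_fin_two]

theorem spectrum_fin_two_of_det_eq_one {M : Matrix (Fin 2) (Fin 2) K}
    (hM : M.det = 1) {μ : K} (hμ : μ ≠ 0) (htr : μ + μ⁻¹ = M.trace) :
    spectrum K M = {μ, μ⁻¹} := by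
  ext x
  have hfactor : x ^ 2 - M.trace * x + M.det = (x - μ) * (x - μ⁻¹) := by
    rw [hM, ← htr]
    linear_combination -(mul_inv_cancel₀ hμ)
  rw [mem_spectrum_fin_two_iff, hfactor, mul_eq_zero, sub_eq_zero, sub_eq_zero]
  rfl

theorem diagonal_fin_two_pow (u v : R) (n : ℕ) : !![u, 0; 0, v] ^ n = !![u ^ n, 0; 0, v ^ n] := by
  rw [← diagonal_vec2, diagonal_pow, ← diagonal_vec2]
  congr 1
  ext i
  fin_cases i <;> rfl

theorem trace_mul_diagonal_mul_mul_diagonal_fin_two (a b c d a' b' c' d' u v : R) :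
    trace (!![a, b; c, d] * !![u, 0; 0, v] * !![a', b'; c', d'] * !![v, 0; 0, u]) =
      (a * a' + d * d') * (u * v) + b * c' * v ^ 2 + c * b' * u ^ 2 := by
  simp only [mul_fin_two, trace_fin_two_of]
  ring

end Matrix

theorem Complex.exists_one_le_norm_add_inv_eq (t : ℂ) : ∃ μ : ℂ, 1 ≤ ‖μ‖ ∧ μ + μ⁻¹ = t := by
  obtain ⟨s, hs⟩ := IsAlgClosed.exists_pow_nat_eq (t ^ 2 - 4) two_pos
  -- quadratic formula: `(t ± s) / 2` are the two, mutually inverse, roots of `x² - t x + 1`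
  have hprod : (t + s) / 2 * ((t - s) / 2) = 1 := by linear_combination -hs / 4
  have hinv : ((t + s) / 2)⁻¹ = (t - s) / 2 := inv_eq_of_mul_eq_one_right hprod
  have hsum : (t + s) / 2 + (t - s) / 2 = t := by ring
  rcases le_or_gt 1 ‖(t + s) / 2‖ with h | h
  · exact ⟨(t + s) / 2, h, by rw [hinv, hsum]⟩
  · refine ⟨(t - s) / 2, ?_, by rw [← hinv, inv_inv, add_comm, hinv, hsum]⟩
    rw [← hinv, norm_inv]
    exact one_le_inv_iff₀.mpr ⟨norm_pos_iff.mpr (left_ne_zero_of_mul_eq_one hprod), h.le⟩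

theorem specRad_eq_norm_of_det_eq_one {M : Matrix (Fin 2) (Fin 2) ℂ} (hM : M.det = 1) {μ : ℂ}
    (hμ : 1 ≤ ‖μ‖) (htr : μ + μ⁻¹ = M.trace) : specRad M = ‖μ‖ := by
  have hμ0 : μ ≠ 0 := norm_pos_iff.mp (zero_lt_one.trans_le hμ)
  have hle : ‖μ⁻¹‖₊ ≤ ‖μ‖₊ := by
    rw [← NNReal.coe_le_coe, coe_nnnorm, coe_nnnorm, norm_inv]
    exact (inv_le_one_of_one_le₀ hμ).trans hμ
  rw [specRad, spectralRadius, spectrum_fin_two_of_det_eq_one hM hμ0 htr, iSup_pair,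
    sup_eq_left.mpr (ENNReal.coe_le_coe.mpr hle)]
  rfl

theorem abs_specRad_sub_norm_trace_le_one {M : Matrix (Fin 2) (Fin 2) ℂ} (hM : M.det = 1) :
    |specRad M - ‖M.trace‖| ≤ 1 := by
  obtain ⟨μ, hμ, htr⟩ := Complex.exists_one_le_norm_add_inv_eq M.trace
  rw [specRad_eq_norm_of_det_eq_one hM hμ htr, ← htr]
  calc |‖μ‖ - ‖μ + μ⁻¹‖| ≤ ‖μ - (μ + μ⁻¹)‖ := abs_norm_sub_norm_le _ _
    _ = ‖μ‖⁻¹ := by rw [sub_add_cancel_left, norm_neg, norm_inv]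
    _ ≤ 1 := inv_le_one_of_one_le₀ hμ

theorem tendsto_add_mul_pow_add_mul_inv_pow_div_pow {𝕜 : Type*} [NormedField 𝕜] {z : 𝕜}
    (hz : 1 < ‖z‖) (p q s : 𝕜) :
    Tendsto (fun n : ℕ => (p + q * z ^ n + s * z⁻¹ ^ n) / z ^ n) atTop (𝓝 q) := by
  have hz0 : z ≠ 0 := norm_pos_iff.mp (zero_lt_one.trans hz)
  have hsmall : ‖z⁻¹‖ < 1 := by rw [norm_inv]; exact inv_lt_one_of_one_lt₀ hz
  have h1 := tendsto_pow_atTop_nhds_zero_of_norm_lt_one hsmall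
  have h2 := tendsto_pow_atTop_nhds_zero_of_norm_lt_one (x := z⁻¹ ^ 2)
    (by rw [norm_pow]; exact pow_lt_one₀ (norm_nonneg _) hsmall two_ne_zero)
  have hlim := ((h1.const_mul p).add_const q).add (h2.const_mul s)
  simp only [mul_zero, zero_add, add_zero] at hlim
  refine hlim.congr fun n => ?_
  rw [← pow_mul, inv_pow, inv_pow]
  field_simp
  ring

theorem tendsto_div_pow_of_abs_sub_le {r x : ℕ → ℝ} {q C L : ℝ} (hq : 1 < q)
    (hC : ∀ n, |r n - x n| ≤ C) (hx : Tendsto (fun n => x n / q ^ n) atTop (𝓝 L)) :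
    Tendsto (fun n => r n / q ^ n) atTop (𝓝 L) := by
  have hq0 : 0 < q := zero_lt_one.trans hq
  have hgeom : Tendsto (fun n => C * q⁻¹ ^ n) atTop (𝓝 0) := by
    rw [← mul_zero C]
    exact (tendsto_pow_atTop_nhds_zero_of_lt_one (inv_nonneg.mpr hq0.le)
      (inv_lt_one_of_one_lt₀ hq)).const_mul C
  have hdiff : Tendsto (fun n => (r n - x n) / q ^ n) atTop (𝓝 0) := by
    refine squeeze_zero_norm (fun n => ?_) hgeom
    rw [Real.norm_eq_abs, abs_div, abs_of_pos (pow_pos hq0 n), inv_pow, ← div_eq_mul_inv]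
    exact div_le_div_of_nonneg_right (hC n) (pow_pos hq0 n).le
  simpa [sub_div] using hdiff.add hx

theorem specRad_conjugated_product_tendsto_general
    (l a b c d a' b' c' d' : ℂ) (hl : 1 < ‖l‖)
    (G S N : Matrix (Fin 2) (Fin 2) ℂ)
    (hG : G = !![l, 0; 0, l⁻¹])
    (hS : S = !![a, b; c, d])
    (hN : N = !![a', b'; c', d'])
    (hdetS : S.det = 1) (hdetN : N.det = 1)
    (r : ℕ → ℝ)
    (hr : ∀ n : ℕ, r n = specRad (S * G⁻¹ ^ n * N * G ^ n)) :
    Tendsto (fun n : ℕ => r n / (‖l‖) ^ (2 * n)) atTop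
      (nhds (‖b * c'‖)) := by
  have hl0 : l ≠ 0 := norm_pos_iff.mp (zero_lt_one.trans hl)
  have hGinv : G⁻¹ = !![l⁻¹, 0; 0, l] := by
    refine inv_eq_left_inv ?_
    simp [hG, one_fin_two, hl0]
  have htrace (n : ℕ) : (S * G⁻¹ ^ n * N * G ^ n).trace =
      a * a' + d * d' + b * c' * (l ^ 2) ^ n + c * b' * (l ^ 2)⁻¹ ^ n := by
    rw [hS, hN, hGinv, hG, diagonal_fin_two_pow, diagonal_fin_two_pow,
      trace_mul_diagonal_mul_mul_diagonal_fin_two, inv_pow, inv_mul_cancel₀ (pow_ne_zero n hl0)]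
    ring
  have hdet (n : ℕ) : (S * G⁻¹ ^ n * N * G ^ n).det = 1 := by
    simp [det_mul, det_pow, hdetS, hdetN, hG, hl0]
  have hlim := (tendsto_add_mul_pow_add_mul_inv_pow_div_pow (z := l ^ 2)
    (by rw [norm_pow]; exact one_lt_pow₀ hl two_ne_zero) (a * a' + d * d') (b * c') (c * b')).norm
  simp only [norm_div, norm_pow, ← htrace] at hlim
  simp only [pow_mul, hr]
  exact tendsto_div_pow_of_abs_sub_le (one_lt_pow₀ hl two_ne_zero)
    (fun n => abs_specRad_sub_norm_trace_le_one (hdet n)) hlim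

/-- With `G = diag(λ, λ⁻¹)`, `|λ| > 1`, `det S = det N = 1` and `b·c' ≠ 0`,
the spectral radius `r_n` of `M_n = S · G⁻ⁿ · N · Gⁿ` satisfies `r_n / |λ|^(2n) → |b·c'|`. -/
theorem specRad_conjugated_product_tendsto
    (l a b c d a' b' c' d' : ℂ) (hl : 1 < ‖l‖)
    (G S N : Matrix (Fin 2) (Fin 2) ℂ)
    (hG : G = !![l, 0; 0, l⁻¹])
    (hS : S = !![a, b; c, d])
    (hN : N = !![a', b'; c', d'])
    (hdetS : S.det = 1) (hdetN : N.det = 1)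
    (hbc : b * c' ≠ 0)
    (r : ℕ → ℝ)
    (hr : ∀ n : ℕ, r n = specRad (S * G⁻¹ ^ n * N * G ^ n)) :
    Tendsto (fun n : ℕ => r n / (‖l‖) ^ (2 * n)) atTop
      (nhds (‖b * c'‖)) :=
  specRad_conjugated_product_tendsto_general l a b c d a' b' c' d' hl G S N hG hS hN hdetS hdetN r
    hr
end

section
/- Let λ ∈ ℂ with |λ| > 1, let G = diag(λ, λ⁻¹), and let S = [[a, b], [c, d]] and N = [[a′, b′], [c′, d′]] be 2×2 complex matrices with det S = det N = 1 and b·c′ ≠ 0. For each natural number n let r_n denote the spectral radius of the matrix M_n = S · G⁻ⁿ · N · Gⁿ. Then there exists a constant C > 0 such that for all n ≥ 1 one has 2·log r_n ≥ 4·n·log|λ| − C. -/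
/-!
Conjugating by `Gⁿ = diag(λⁿ, λ⁻ⁿ)` scales the off-diagonal entries of `N` by `λ^{±2n}`, so
`M_n` has determinant `1` and trace `a a' + d d' + b c' λ^{2n} + c b' λ^{-2n}`. The eigenvalues
of `M_n` multiply to `1` and add up to its trace, hence `r_n ≥ 1` and
`2 r_n ≥ |tr M_n| ≥ |b c'| |λ|^{2n} - K` with `K = |a a' + d d'| + |c b'|`. Adding `K` times the
first inequality to the second gives `(K + 2) r_n ≥ |b c'| |λ|^{2n}`; take logarithms.
-/

open Matrix

namespace Matrix

variable {ι K : Type*} [Fintype ι] [DecidableEq ι]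

theorem spectralRadius_ne_top (A : Matrix ι ι ℂ) : spectralRadius ℂ A ≠ ⊤ := by
  refine ne_top_of_le_ne_top
    (ENNReal.coe_ne_top (r := (finite_spectrum A).toFinset.sup fun k => ‖k‖₊)) ?_
  exact iSup₂_le fun k hk => ENNReal.coe_le_coe.2 <| Finset.le_sup (f := fun k => ‖k‖₊) <|
    (finite_spectrum A).mem_toFinset.2 hk

theorem norm_le_toReal_spectralRadius {A : Matrix ι ι ℂ} {μ : ℂ} (hμ : μ ∈ spectrum ℂ A) :
    ‖μ‖ ≤ (spectralRadius ℂ A).toReal :=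
  ENNReal.toReal_mono A.spectralRadius_ne_top (le_iSup₂ (f := fun k _ => (‖k‖₊ : ENNReal)) μ hμ)

theorem norm_le_toReal_spectralRadius_of_mem_roots {A : Matrix ι ι ℂ} {μ : ℂ}
    (hμ : μ ∈ A.charpoly.roots) : ‖μ‖ ≤ (spectralRadius ℂ A).toReal :=
  norm_le_toReal_spectralRadius <|
    mem_spectrum_iff_isRoot_charpoly.2 (Polynomial.isRoot_of_mem_roots hμ)

theorem card_roots_charpoly (A : Matrix ι ι ℂ) : A.charpoly.roots.card = Fintype.card ι := by
  rw [IsAlgClosed.card_roots_eq_natDegree, charpoly_natDegree_eq_dim]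

theorem norm_trace_le_card_mul_spectralRadius (A : Matrix ι ι ℂ) :
    ‖A.trace‖ ≤ Fintype.card ι * (spectralRadius ℂ A).toReal := by
  rw [trace_eq_sum_roots_charpoly, ← A.card_roots_charpoly, ← nsmul_eq_mul]
  refine (norm_multiset_sum_le _).trans ?_
  rw [← Multiset.card_map norm]
  exact Multiset.sum_le_card_nsmul _ _ fun x hx => by
    obtain ⟨μ, hμ, rfl⟩ := Multiset.mem_map.1 hx
    exact norm_le_toReal_spectralRadius_of_mem_roots hμ

theorem norm_det_le_spectralRadius_pow (A : Matrix ι ι ℂ) :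
    ‖A.det‖ ≤ (spectralRadius ℂ A).toReal ^ Fintype.card ι := by
  rw [det_eq_prod_roots_charpoly, ← A.card_roots_charpoly, ← normHom_apply,
    map_multiset_prod]
  exact Multiset.prod_map_le_pow_card (fun μ _ => norm_nonneg μ)
    fun μ hμ => norm_le_toReal_spectralRadius_of_mem_roots hμ

theorem trace_mul_diagonal_mul_diagonal [CommSemiring K] (S N : Matrix ι ι K) (u v : ι → K) :
    trace (S * diagonal u * N * diagonal v) = ∑ i, ∑ j, S i j * N j i * (u j * v i) := by
  simp only [trace, diag, mul_apply, diagonal_apply, mul_ite, mul_zero, Finset.sum_ite_eq',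
    Finset.mem_univ, if_true, Finset.sum_mul]
  exact Finset.sum_congr rfl fun i _ => Finset.sum_congr rfl fun j _ => by ring

theorem inv_diagonal_of_ne_zero [Field K] {u : ι → K} (hu : ∀ i, u i ≠ 0) :
    (diagonal u)⁻¹ = diagonal u⁻¹ :=
  inv_eq_left_inv <| by rw [diagonal_mul_diagonal]; simp [hu]

theorem trace_mul_inv_pow_mul_mul_pow_diagonal [Field K] (S N : Matrix ι ι K) {u : ι → K}
    (hu : ∀ i, u i ≠ 0) (n : ℕ) :
    trace (S * (diagonal u)⁻¹ ^ n * N * diagonal u ^ n)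
      = ∑ i, ∑ j, S i j * N j i * (u i / u j) ^ n := by
  rw [inv_diagonal_of_ne_zero hu, diagonal_pow, diagonal_pow, trace_mul_diagonal_mul_diagonal]
  simp only [Pi.pow_apply, Pi.inv_apply, div_eq_inv_mul, mul_pow]

theorem det_mul_inv_pow_mul_mul_pow [CommRing K] (S N G : Matrix ι ι K) (hG : IsUnit G.det)
    (n : ℕ) : det (S * G⁻¹ ^ n * N * G ^ n) = S.det * N.det := by
  rw [det_mul, det_mul, det_mul, det_pow, det_pow]
  have hpow : (G⁻¹.det * G.det) ^ n = 1 := by rw [G.det_nonsing_inv_mul_det hG, one_pow]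
  linear_combination S.det * N.det * hpow

end Matrix

theorem one_le_specRad_of_det_eq_one {M : Matrix (Fin 2) (Fin 2) ℂ} (hM : M.det = 1) :
    1 ≤ specRad M := by
  have h := M.norm_det_le_spectralRadius_pow
  rw [hM, norm_one, Fintype.card_fin] at h
  exact (one_le_pow_iff_of_nonneg ENNReal.toReal_nonneg two_ne_zero).1 h

theorem norm_trace_le_two_mul_specRad (M : Matrix (Fin 2) (Fin 2) ℂ) :
    ‖M.trace‖ ≤ 2 * specRad M := by
  simpa [specRad] using M.norm_trace_le_card_mul_spectralRadius

theorem le_mul_specRad_of_sub_le_norm_trace {M : Matrix (Fin 2) (Fin 2) ℂ} (hM : M.det = 1)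
    {x K : ℝ} (hK : 0 ≤ K) (h : x - K ≤ ‖M.trace‖) : x ≤ (K + 2) * specRad M := by
  nlinarith [one_le_specRad_of_det_eq_one hM, norm_trace_le_two_mul_specRad M]

theorem norm_trace_conj_diagonal_fin_two_ge (a b c d a' b' c' d' : ℂ) {l : ℂ} (hl : 1 ≤ ‖l‖)
    (n : ℕ) :
    ‖b * c'‖ * (‖l‖ ^ 2) ^ n - (‖a * a' + d * d'‖ + ‖c * b'‖)
      ≤ ‖trace (!![a, b; c, d] * (diagonal ![l, l⁻¹])⁻¹ ^ n * !![a', b'; c', d']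
          * diagonal ![l, l⁻¹] ^ n)‖ := by
  have hl0 : l ≠ 0 := norm_pos_iff.1 (one_pos.trans_le hl)
  rw [trace_mul_inv_pow_mul_mul_pow_diagonal _ _ (by simp [Fin.forall_fin_two, hl0])]
  simp only [Fin.sum_univ_two, of_apply, cons_val', cons_val_zero, cons_val_one, empty_val',
    cons_val_fin_one, div_self hl0, div_self (inv_ne_zero hl0), one_pow, mul_one]
  set Y := b * c' * (l / l⁻¹) ^ n
  set Z := c * b' * (l⁻¹ / l) ^ n
  have hY : ‖Y‖ = ‖b * c'‖ * (‖l‖ ^ 2) ^ n := by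
    simp only [Y, norm_mul, norm_pow, div_inv_eq_mul, sq]
  have hZ : ‖Z‖ ≤ ‖c * b'‖ := by
    rw [norm_mul]
    refine mul_le_of_le_one_right (norm_nonneg _) ?_
    rw [norm_pow, norm_div, norm_inv]
    exact pow_le_one₀ (by positivity) <|
      div_le_one_of_le₀ ((inv_le_one_of_one_le₀ hl).trans hl) (norm_nonneg _)
  have htri : ‖Y‖ ≤ ‖a * a' + Y + (Z + d * d')‖ + ‖a * a' + d * d'‖ + ‖Z‖ :=
    calc ‖Y‖ = ‖a * a' + Y + (Z + d * d') + -(a * a' + d * d') + -Z‖ := by congr 1; ring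
      _ ≤ _ := norm_add₃_le
      _ = _ := by rw [norm_neg, norm_neg]
  linarith

/-- With `G = diag(λ, λ⁻¹)`, `|λ| > 1`, `det S = det N = 1` and `b·c' ≠ 0`,
the spectral radius `r_n` of `M_n = S · G⁻ⁿ · N · Gⁿ` satisfies
`2·log r_n ≥ 4·n·log|λ| − C` for all `n ≥ 1`, for some constant `C > 0`. -/
theorem specRad_conjugated_product_log_lower_bound
    (l a b c d a' b' c' d' : ℂ) (hl : 1 < ‖l‖)
    (G S N : Matrix (Fin 2) (Fin 2) ℂ)
    (hG : G = !![l, 0; 0, l⁻¹])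
    (hS : S = !![a, b; c, d])
    (hN : N = !![a', b'; c', d'])
    (hdetS : S.det = 1) (hdetN : N.det = 1)
    (hbc : b * c' ≠ 0)
    (r : ℕ → ℝ)
    (hr : ∀ n : ℕ, r n = specRad (S * G⁻¹ ^ n * N * G ^ n)) :
    ∃ C : ℝ, 0 < C ∧ ∀ n : ℕ, 1 ≤ n →
      2 * Real.log (r n) ≥ 4 * (n : ℝ) * Real.log (‖l‖) - C := by
  have hl0 : l ≠ 0 := norm_pos_iff.1 (one_pos.trans hl)
  rw [← diagonal_vec2] at hG
  subst hG hS hN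
  set K := ‖a * a' + d * d'‖ + ‖c * b'‖
  have hgrowth : ∀ n, ‖b * c'‖ * (‖l‖ ^ 2) ^ n ≤ (K + 2) * r n := fun n => by
    have hdet := det_mul_inv_pow_mul_mul_pow !![a, b; c, d] !![a', b'; c', d']
      (diagonal ![l, l⁻¹]) (by simp [hl0]) n
    rw [hdetS, hdetN, one_mul] at hdet
    rw [hr]
    exact le_mul_specRad_of_sub_le_norm_trace hdet (by positivity)
      (norm_trace_conj_diagonal_fin_two_ge a b c d a' b' c' d' hl.le n)
  set ε := ‖b * c'‖ / (K + 2)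
  have hε : 0 < ε := div_pos (norm_pos_iff.2 hbc) (by positivity)
  refine ⟨2 * |Real.log ε| + 1, by positivity, fun n _ => ?_⟩
  have hlog : Real.log (ε * (‖l‖ ^ 2) ^ n) ≤ Real.log (r n) :=
    Real.log_le_log (by positivity) <| by
      rw [div_mul_eq_mul_div, div_le_iff₀' (by positivity)]
      exact hgrowth n
  rw [Real.log_mul hε.ne' (by positivity), Real.log_pow, Real.log_pow] at hlog
  push_cast at hlog
  linarith [neg_abs_le (Real.log ε)]
end

section
/- Let V be a real vector space of finite dimension m, let W be a real inner product space, let T : V → W be a linear map, and let C ≥ 1 be a real constant. Let q and q′ be symmetric positive-definite bilinear forms on V such that q(v,v)/C ≤ q′(v,v) ≤ C·q(v,v) for all v ∈ V. Then for every basis (e₁, …, e_m) of V with q(eᵢ, eⱼ) = δᵢⱼ and every basis (f₁, …, f_m) of V with q′(fᵢ, fⱼ) = δᵢⱼ, one has (1/C)·Σⱼ ‖T fⱼ‖² ≤ Σᵢ ‖T eᵢ‖² ≤ C·Σⱼ ‖T fⱼ‖². -/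
/-!
For a linear functional `φ`, the sum `∑ φ (e i) ^ 2` over a `q`-orthonormal basis is the squared
norm of `φ` dual to `q`: with `v = ∑ φ (e i) • e i` one has `φ v = q v v = ∑ φ (e i) ^ 2`, and
Cauchy–Schwarz in `f`-coordinates gives `φ v ^ 2 ≤ q' v v * ∑ φ (f j) ^ 2`. Hence `q' ≤ C q`
yields `∑ φ (e i) ^ 2 ≤ C ∑ φ (f j) ^ 2`. The vector-valued statement follows by applying this to
the coordinates of `T` in an orthonormal basis of its (finite-dimensional) range.
-/

open scoped RealInnerProductSpace

section OrthonormalBasisOfForm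

variable {ι V : Type*} [Fintype ι] [DecidableEq ι] [AddCommGroup V] [Module ℝ V]

theorem LinearMap.apply_eq_sum_repr_mul_repr {q : V →ₗ[ℝ] V →ₗ[ℝ] ℝ} {b : Module.Basis ι ℝ V}
    (hb : ∀ i j, q (b i) (b j) = if i = j then 1 else 0) (v w : V) :
    q v w = ∑ i, b.repr v i * b.repr w i := by
  conv_lhs => rw [← b.sum_repr v, ← b.sum_repr w]
  simp only [map_sum, map_smul, LinearMap.sum_apply, LinearMap.smul_apply, hb, smul_eq_mul,
    mul_ite, mul_one, mul_zero, Finset.sum_ite_eq', Finset.mem_univ, if_true]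
  exact Finset.sum_congr rfl fun i _ => mul_comm _ _

theorem sum_sq_apply_le_of_form_le {κ : Type*} [Fintype κ] [DecidableEq κ] (φ : V →ₗ[ℝ] ℝ)
    {q q' : V →ₗ[ℝ] V →ₗ[ℝ] ℝ} {e : Module.Basis ι ℝ V} {f : Module.Basis κ ℝ V}
    (he : ∀ i j, q (e i) (e j) = if i = j then 1 else 0)
    (hf : ∀ i j, q' (f i) (f j) = if i = j then 1 else 0)
    {C : ℝ} (hC : 0 ≤ C) (hle : ∀ v, q' v v ≤ C * q v v) :
    ∑ i, φ (e i) ^ 2 ≤ C * ∑ j, φ (f j) ^ 2 := by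
  set S := ∑ i, φ (e i) ^ 2
  set v := ∑ i, φ (e i) • e i with hv
  have hφv : φ v = S := by simp [v, S, sq]
  have hqv : q v v = S := by
    rw [LinearMap.apply_eq_sum_repr_mul_repr he, hv, e.repr_sum_self]
    simp [S, sq]
  have hφv' : φ v = ∑ j, f.repr v j * φ (f j) := by
    conv_lhs => rw [← f.sum_repr v]
    simp only [map_sum, map_smul, smul_eq_mul]
  have hq'v : q' v v = ∑ j, f.repr v j ^ 2 := by
    simp [LinearMap.apply_eq_sum_repr_mul_repr hf, sq]
  have hCS : S ^ 2 ≤ C * S * ∑ j, φ (f j) ^ 2 := calc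
    S ^ 2 = (∑ j, f.repr v j * φ (f j)) ^ 2 := by rw [← hφv', hφv]
    _ ≤ q' v v * ∑ j, φ (f j) ^ 2 := by rw [hq'v]; exact Finset.sum_mul_sq_le_sq_mul_sq _ _ _
    _ ≤ C * S * ∑ j, φ (f j) ^ 2 := by
        gcongr
        rw [← hqv]; exact hle v
  rcases (show 0 ≤ S by positivity).eq_or_lt with hS | hS
  · rw [← hS]; positivity
  · nlinarith

theorem norm_sq_eq_sum_inner_sq_of_mem {W κ : Type*} [Fintype κ] [NormedAddCommGroup W]
    [InnerProductSpace ℝ W] {K : Submodule ℝ W} (b : OrthonormalBasis κ ℝ K) {w : W}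
    (hw : w ∈ K) : ‖w‖ ^ 2 = ∑ k, ⟪(b k : W), w⟫ ^ 2 := by
  simpa using (b.sum_sq_inner_right ⟨w, hw⟩).symm

theorem sum_norm_sq_apply_le_of_form_le {κ W : Type*} [Fintype κ] [DecidableEq κ]
    [NormedAddCommGroup W] [InnerProductSpace ℝ W] (T : V →ₗ[ℝ] W)
    {q q' : V →ₗ[ℝ] V →ₗ[ℝ] ℝ} {e : Module.Basis ι ℝ V} {f : Module.Basis κ ℝ V}
    (he : ∀ i j, q (e i) (e j) = if i = j then 1 else 0)
    (hf : ∀ i j, q' (f i) (f j) = if i = j then 1 else 0)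
    {C : ℝ} (hC : 0 ≤ C) (hle : ∀ v, q' v v ≤ C * q v v) :
    ∑ i, ‖T (e i)‖ ^ 2 ≤ C * ∑ j, ‖T (f j)‖ ^ 2 := by
  have : FiniteDimensional ℝ V := Module.Finite.of_basis e
  let b := stdOrthonormalBasis ℝ (LinearMap.range T)
  have hT v := norm_sq_eq_sum_inner_sq_of_mem b (LinearMap.mem_range_self T v)
  simp_rw [hT]
  rw [Finset.sum_comm, Finset.sum_comm (s := Finset.univ (α := κ)), Finset.mul_sum]
  exact Finset.sum_le_sum fun k _ =>
    sum_sq_apply_le_of_form_le (innerₛₗ ℝ (b k : W) ∘ₗ T) he hf hC hle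

end OrthonormalBasisOfForm

theorem energy_density_comparison_general
    {V : Type*} [AddCommGroup V] [Module ℝ V]
    {W : Type*} [NormedAddCommGroup W] [InnerProductSpace ℝ W]
    (m : ℕ)
    (T : V →ₗ[ℝ] W) (C : ℝ) (hC : 1 ≤ C)
    (q q' : V →ₗ[ℝ] V →ₗ[ℝ] ℝ)
    (hcomp : ∀ v : V, q v v / C ≤ q' v v ∧ q' v v ≤ C * q v v)
    (e : Module.Basis (Fin m) ℝ V)
    (he : ∀ i j : Fin m, q (e i) (e j) = if i = j then 1 else 0)
    (f : Module.Basis (Fin m) ℝ V)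
    (hf : ∀ i j : Fin m, q' (f i) (f j) = if i = j then 1 else 0) :
    (1 / C) * ∑ j : Fin m, ‖T (f j)‖ ^ 2 ≤ ∑ i : Fin m, ‖T (e i)‖ ^ 2 ∧
      ∑ i : Fin m, ‖T (e i)‖ ^ 2 ≤ C * ∑ j : Fin m, ‖T (f j)‖ ^ 2 := by
  have hC₀ : 0 < C := zero_lt_one.trans_le hC
  have hq_le : ∀ v, q v v ≤ C * q' v v := fun v => by
    have := (hcomp v).1
    rwa [div_le_iff₀ hC₀, mul_comm] at this
  refine ⟨?_, sum_norm_sq_apply_le_of_form_le T he hf hC₀.le fun v => (hcomp v).2⟩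
  rw [one_div_mul_eq_div, div_le_iff₀ hC₀, mul_comm]
  exact sum_norm_sq_apply_le_of_form_le T hf he hC₀.le hq_le

/-- Comparison of energy densities with respect to bi-Lipschitz equivalent
scalar products. If `q, q'` are symmetric positive-definite bilinear forms on an
`m`-dimensional real vector space `V` with `q(v,v)/C ≤ q'(v,v) ≤ C·q(v,v)`, `T : V → W`
is linear into a real inner product space, `(eᵢ)` is a `q`-orthonormal basis and `(fⱼ)`
a `q'`-orthonormal basis, then `(1/C)·Σ‖T fⱼ‖² ≤ Σ‖T eᵢ‖² ≤ C·Σ‖T fⱼ‖²`. -/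
theorem energy_density_comparison
    {V : Type*} [AddCommGroup V] [Module ℝ V] [FiniteDimensional ℝ V]
    {W : Type*} [NormedAddCommGroup W] [InnerProductSpace ℝ W]
    (m : ℕ) (hdim : Module.finrank ℝ V = m)
    (T : V →ₗ[ℝ] W) (C : ℝ) (hC : 1 ≤ C)
    (q q' : V →ₗ[ℝ] V →ₗ[ℝ] ℝ)
    (hqsymm : ∀ v w : V, q v w = q w v)
    (hq'symm : ∀ v w : V, q' v w = q' w v)
    (hqpos : ∀ v : V, v ≠ 0 → 0 < q v v)
    (hq'pos : ∀ v : V, v ≠ 0 → 0 < q' v v)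
    (hcomp : ∀ v : V, q v v / C ≤ q' v v ∧ q' v v ≤ C * q v v)
    (e : Module.Basis (Fin m) ℝ V)
    (he : ∀ i j : Fin m, q (e i) (e j) = if i = j then 1 else 0)
    (f : Module.Basis (Fin m) ℝ V)
    (hf : ∀ i j : Fin m, q' (f i) (f j) = if i = j then 1 else 0) :
    (1 / C) * ∑ j : Fin m, ‖T (f j)‖ ^ 2 ≤ ∑ i : Fin m, ‖T (e i)‖ ^ 2 ∧
      ∑ i : Fin m, ‖T (e i)‖ ^ 2 ≤ C * ∑ j : Fin m, ‖T (f j)‖ ^ 2 :=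
  energy_density_comparison_general m T C hC q q' hcomp e he f hf
end
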